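/- arXiv:1308.6772 — 5 statements merged into one kernel-verified Lean document; each statement's English description precedes it below -/
import Mathlib

section
/- For Fibonacci quaternions and all n, m ≥ 1: Q_n Q_m + Q_{n+1} Q_{m+1} = −(L_{n+m+2} + L_{n+m+6}) + 2 Q_{n+m+1}, where the Lucas numbers are regarded as real scalars in ℍ. -/
open Quaternion TrivSqZeroExt DualNumber

noncomputable section

/-- The n-th Fibonacci quaternion Q_n = F_n + i F_{n+1} + j F_{n+2} + k F_{n+3}. -/
def fibQ (n : ℕ) : ℍ[ℝ] :=
  ⟨Nat.fib n, Nat.fib (n+1), Nat.fib (n+2), Nat.fib (n+3)⟩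

/-- Lucas numbers: L_0 = 2, L_1 = 1. -/
def lucas : ℕ → ℕ
  | 0 => 2
  | 1 => 1
  | n + 2 => lucas n + lucas (n+1)

/-- The n-th Lucas quaternion K_n = L_n + i L_{n+1} + j L_{n+2} + k L_{n+3}. -/
def lucasQ (n : ℕ) : ℍ[ℝ] :=
  ⟨lucas n, lucas (n+1), lucas (n+2), lucas (n+3)⟩

/-- The n-th dual Fibonacci quaternion Q̃_n = Q_n + ε Q_{n+1}. -/
def dQ (n : ℕ) : DualNumber ℍ[ℝ] := inl (fibQ n) + inl (fibQ (n+1)) * ε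

/-- The n-th dual Lucas quaternion K̃_n = K_n + ε K_{n+1}. -/
def dK (n : ℕ) : DualNumber ℍ[ℝ] := inl (lucasQ n) + inl (lucasQ (n+1)) * ε

/-- Conjugate of the dual Fibonacci quaternion (componentwise quaternion conjugation). -/
def dQconj (n : ℕ) : DualNumber ℍ[ℝ] := inl (star (fibQ n)) + inl (star (fibQ (n+1))) * ε

/-- The dual Fibonacci number F̃_n = F_n + ε F_{n+1} as a scalar dual quaternion. -/
def dF (n : ℕ) : DualNumber ℍ[ℝ] :=
  inl ((Nat.fib n : ℝ) : ℍ[ℝ]) + inl ((Nat.fib (n+1) : ℝ) : ℍ[ℝ]) * ε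

/-- The dual Lucas number L̃_n = L_n + ε L_{n+1} as a scalar dual quaternion. -/
def dL (n : ℕ) : DualNumber ℍ[ℝ] :=
  inl ((lucas n : ℝ) : ℍ[ℝ]) + inl ((lucas (n+1) : ℝ) : ℍ[ℝ]) * ε

def qi : ℍ[ℝ] := ⟨0,1,0,0⟩
def qj : ℍ[ℝ] := ⟨0,0,1,0⟩
def qk : ℍ[ℝ] := ⟨0,0,0,1⟩

/-!
Writing `Q_n = ∑_c F_{n+c} e_c` with `e = (1, i, j, k)`, the addition formula
`F_a F_b + F_{a+1} F_{b+1} = F_{a+b+1}` gives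
`Q_n Q_m + Q_{n+1} Q_{m+1} = ∑_{c,d} F_{N+c+d} e_c e_d` with `N = n + m + 1`. The coefficient
depends only on `c + d`, so the terms `e_c e_d = -e_d e_c` with `c ≠ d` both nonzero cancel, leaving
`2 Q_N - (F_N + F_{N+2} + F_{N+4} + F_{N+6})`, and `L_{k+1} = F_k + F_{k+2}`.
-/

theorem lucas_succ_eq_fib_add_fib : ∀ n, lucas (n + 1) = Nat.fib n + Nat.fib (n + 2)
  | 0 => rfl
  | 1 => rfl
  | n + 2 => by
    rw [lucas, lucas_succ_eq_fib_add_fib n, lucas_succ_eq_fib_add_fib (n + 1)]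
    simp only [Nat.fib_add_two]
    ring

theorem fib_mul_add_fib_succ_mul (a b : ℕ) :
    (Nat.fib a * Nat.fib b + Nat.fib (a + 1) * Nat.fib (b + 1) : ℝ) = Nat.fib (a + b + 1) := by
  exact_mod_cast (Nat.fib_add a b).symm

theorem fibQ_mul_add_fibQ_succ_mul (n m : ℕ) :
    fibQ n * fibQ m + fibQ (n + 1) * fibQ (m + 1) =
      2 * fibQ (n + m + 1) - ((Nat.fib (n + m + 1) + Nat.fib (n + m + 3) + Nat.fib (n + m + 5)
        + Nat.fib (n + m + 7) : ℝ) : ℍ[ℝ]) := by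
  have hF (c d : ℕ) := fib_mul_add_fib_succ_mul (n + c) (m + d)
  rw [two_mul]
  ext <;> simp only [re_mul, imI_mul, imJ_mul, imK_mul, re_add, imI_add, imJ_add, imK_add,
      re_sub, imI_sub, imJ_sub, imK_sub, re_coe, imI_coe, imJ_coe, imK_coe] <;>
    simp only [fibQ]
  · linear_combination (norm := ring_nf) hF 0 0 - hF 1 1 - hF 2 2 - hF 3 3
  · linear_combination (norm := ring_nf) hF 0 1 + hF 1 0 + hF 2 3 - hF 3 2
  · linear_combination (norm := ring_nf) hF 0 2 + hF 2 0 + hF 3 1 - hF 1 3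
  · linear_combination (norm := ring_nf) hF 0 3 + hF 3 0 + hF 1 2 - hF 2 1

theorem fib_quaternion_product_sum_general (n m : ℕ) :
    fibQ n * fibQ m + fibQ (n+1) * fibQ (m+1) =
      -(((lucas (n+m+2) : ℝ) : ℍ[ℝ]) + ((lucas (n+m+6) : ℝ) : ℍ[ℝ])) + 2 * fibQ (n+m+1) := by
  rw [fibQ_mul_add_fibQ_succ_mul, lucas_succ_eq_fib_add_fib, lucas_succ_eq_fib_add_fib]
  push_cast
  abel

theorem fib_quaternion_product_sum (n m : ℕ) (hn : 1 ≤ n) (hm : 1 ≤ m) :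
    fibQ n * fibQ m + fibQ (n+1) * fibQ (m+1) =
      -(((lucas (n+m+2) : ℝ) : ℍ[ℝ]) + ((lucas (n+m+6) : ℝ) : ℍ[ℝ])) + 2 * fibQ (n+m+1) :=
  fib_quaternion_product_sum_general n m

end
end

section
/- For n ≥ 0, the norm of the dual Fibonacci quaternion satisfies Q̃_n · conj(Q̃_n) = F_{2n+1} + F_{2n+5} + 2ε(F_{2n+2} + F_{2n+6}), where conj conjugates each quaternion component. -/
open Quaternion TrivSqZeroExt DualNumber

noncomputable section

/-! Multiplying out, `Q̃ₙ · conj Q̃ₙ = Qₙ Q̄ₙ + ε (Qₙ Q̄ₙ₊₁ + Qₙ₊₁ Q̄ₙ)`. The real part is the norm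
`Fₙ² + Fₙ₊₁² + Fₙ₊₂² + Fₙ₊₃²`, and the dual part is twice the real part of `Qₙ Q̄ₙ₊₁`, i.e. of
`∑ Fₘ Fₘ₊₁` over `m = n, …, n + 3`. Pairing consecutive terms, the classical identities
`Fₘ² + Fₘ₊₁² = F₂ₘ₊₁` and `Fₘ Fₘ₊₁ + Fₘ₊₁ Fₘ₊₂ = F₂ₘ₊₂` give the closed forms. -/

theorem DualNumber.inl_add_inl_mul_eps_mul {R : Type*} [Semiring R] (a b c d : R) :
    (inl a + inl b * ε : R[ε]) * (inl c + inl d * ε) = inl (a * c) + inl (a * d + b * c) * ε := by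
  ext <;> simp

theorem Quaternion.mul_star_add_mul_star {R : Type*} [CommRing R] (a b : ℍ[R]) :
    a * star b + b * star a = 2 * (a * star b).re := by
  simpa using self_add_star (a * star b)

theorem Nat.fib_mul_fib_succ_add_fib_succ_mul_fib_add_two (m : ℕ) :
    fib m * fib (m + 1) + fib (m + 1) * fib (m + 2) = fib (2 * m + 2) := by
  rw [show 2 * m + 2 = m + (m + 1) + 1 by ring]
  exact (fib_add m (m + 1)).symm

theorem normSq_fibQ (n : ℕ) :
    normSq (fibQ n) = Nat.fib (2 * n + 1) + Nat.fib (2 * n + 5) := by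
  rw [normSq_def', show 2 * n + 5 = 2 * (n + 2) + 1 by ring, Nat.fib_two_mul_add_one,
    Nat.fib_two_mul_add_one]
  simp only [fibQ]
  push_cast
  ring

theorem re_fibQ_mul_star_fibQ_succ (n : ℕ) :
    (fibQ n * star (fibQ (n + 1))).re = Nat.fib (2 * n + 2) + Nat.fib (2 * n + 6) := by
  rw [show 2 * n + 6 = 2 * (n + 2) + 2 by ring,
    ← Nat.fib_mul_fib_succ_add_fib_succ_mul_fib_add_two,
    ← Nat.fib_mul_fib_succ_add_fib_succ_mul_fib_add_two]
  simp only [re_mul, re_star, imI_star, imJ_star, imK_star]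
  simp only [fibQ]
  push_cast
  ring

theorem dual_fib_quaternion_norm (n : ℕ) :
    dQ n * dQconj n =
      inl (((Nat.fib (2*n+1) : ℝ) + (Nat.fib (2*n+5) : ℝ) : ℍ[ℝ])) +
      inl ((2 * ((Nat.fib (2*n+2) : ℝ) + (Nat.fib (2*n+6) : ℝ)) : ℍ[ℝ])) * ε := by
  rw [dQ, dQconj, DualNumber.inl_add_inl_mul_eps_mul, self_mul_star, mul_star_add_mul_star,
    normSq_fibQ, re_fibQ_mul_star_fibQ_succ]
  push_cast
  -- the sides now differ only in ℕ → ℍ[ℝ] casts taken directly or through ℝ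
  rfl
end
end

section
/- For n ≥ 1, Q̃_n² + Q̃_{n−1}² = 2 Q̃_{2n−1} − 3 L̃_{2n+2} + ε(2 Q_{2n} − 3 L_{2n+3}), where L̃_m = L_m + ε L_{m+1} is a scalar dual number. -/
/-! With `Q̃_n = Q_n + ε Q_{n+1}`, the ε-free part of the identity is the quaternion identity
`Q_{m+1}² + Q_m² = 2 Q_{2m+1} - 3 L_{2m+4}`, checked componentwise from
`F_a F_b + F_{a+1} F_{b+1} = F_{a+b+1}` and `3 L_{k+3} = F_k + F_{k+2} + F_{k+4} + F_{k+6}`.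
The ε-part is the anticommutator sum `{Q_{m+1}, Q_{m+2}} + {Q_m, Q_{m+1}}`. Polarising
`Q_{k+2}² = (Q_{k+1} + Q_k)²` turns it into an alternating sum of three instances of the ε-free
part, and since the right-hand sides `2 Q_j - 3 L_{j+3}` again satisfy the Fibonacci recurrence,
that sum collapses to twice `2 Q_{2m+2} - 3 L_{2m+5}`. -/

open Quaternion TrivSqZeroExt DualNumber

noncomputable section

namespace Quaternion

variable {R : Type*} [CommRing R]

section OfNat

variable (n : ℕ) [n.AtLeastTwo]

@[simp] theorem re_ofNat : (ofNat(n) : ℍ[R]).re = ofNat(n) := rfl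
@[simp] theorem imI_ofNat : (ofNat(n) : ℍ[R]).imI = 0 := rfl
@[simp] theorem imJ_ofNat : (ofNat(n) : ℍ[R]).imJ = 0 := rfl
@[simp] theorem imK_ofNat : (ofNat(n) : ℍ[R]).imK = 0 := rfl

end OfNat

variable (q : ℍ[R])

theorem re_sq : (q ^ 2).re = q.re ^ 2 - q.imI ^ 2 - q.imJ ^ 2 - q.imK ^ 2 := by
  simp only [sq, re_mul]

theorem imI_sq : (q ^ 2).imI = 2 * q.re * q.imI := by
  simp only [sq, imI_mul]; ring

theorem imJ_sq : (q ^ 2).imJ = 2 * q.re * q.imJ := by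
  simp only [sq, imJ_mul]; ring

theorem imK_sq : (q ^ 2).imK = 2 * q.re * q.imK := by
  simp only [sq, imK_mul]; ring

end Quaternion

namespace TrivSqZeroExt

variable {R M : Type*} [AddMonoidWithOne R] [AddMonoid M] (n : ℕ) [n.AtLeastTwo]

@[simp] theorem fst_ofNat : (ofNat(n) : TrivSqZeroExt R M).fst = ofNat(n) := fst_natCast n

@[simp] theorem snd_ofNat : (ofNat(n) : TrivSqZeroExt R M).snd = 0 := snd_natCast n

end TrivSqZeroExt

theorem anticomm_add_anticomm_of_fib_rec {R : Type*} [Ring R] {a : ℕ → R}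
    (h : ∀ n, a (n + 2) = a (n + 1) + a n) (k : ℕ) :
    a (k + 1) * a (k + 2) + a (k + 2) * a (k + 1) + (a k * a (k + 1) + a (k + 1) * a k) =
      (a (k + 3) ^ 2 + a (k + 2) ^ 2) - (a (k + 2) ^ 2 + a (k + 1) ^ 2) -
        (a (k + 1) ^ 2 + a k ^ 2) := by
  rw [h (k + 1), h k]
  noncomm_ring

theorem sub_sub_eq_two_nsmul_of_fib_rec {M : Type*} [AddCommGroup M] {a : ℕ → M}
    (h : ∀ n, a (n + 2) = a (n + 1) + a n) (k : ℕ) :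
    a (k + 4) - a (k + 2) - a k = 2 • a (k + 1) := by
  rw [h (k + 2), h (k + 1), h k]
  abel

theorem lucas_succ (n : ℕ) : lucas (n + 1) = Nat.fib n + Nat.fib (n + 2) := by
  induction n using Nat.twoStepInduction with
  | zero => rfl
  | one => rfl
  | more n ih₁ ih₂ =>
    rw [lucas, ih₁, ih₂]
    simp only [Nat.fib_add_two]
    ring

theorem three_mul_lucas_add_three (n : ℕ) :
    3 * lucas (n + 3) = Nat.fib n + Nat.fib (n + 2) + Nat.fib (n + 4) + Nat.fib (n + 6) := by
  simp only [lucas_succ, Nat.fib_add_two]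
  ring

theorem cast_fib_add (m n : ℕ) :
    (Nat.fib (m + n + 1) : ℝ) = Nat.fib m * Nat.fib n + Nat.fib (m + 1) * Nat.fib (n + 1) := by
  exact_mod_cast Nat.fib_add m n

@[simp] theorem fibQ_re (n : ℕ) : (fibQ n).re = Nat.fib n := rfl
@[simp] theorem fibQ_imI (n : ℕ) : (fibQ n).imI = Nat.fib (n + 1) := rfl
@[simp] theorem fibQ_imJ (n : ℕ) : (fibQ n).imJ = Nat.fib (n + 2) := rfl
@[simp] theorem fibQ_imK (n : ℕ) : (fibQ n).imK = Nat.fib (n + 3) := rfl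

theorem fibQ_add_two (n : ℕ) : fibQ (n + 2) = fibQ (n + 1) + fibQ n := by
  ext <;> simp [Nat.fib_add_two] <;> ring

theorem fibQ_sq_add_fibQ_sq (m : ℕ) :
    fibQ (m + 1) ^ 2 + fibQ m ^ 2 =
      2 * fibQ (2 * m + 1) - 3 * ((lucas (2 * m + 4) : ℝ) : ℍ[ℝ]) := by
  have hL : (3 * lucas (2 * m + 4) : ℝ) =
      Nat.fib (2 * m + 1) + Nat.fib (2 * m + 3) + Nat.fib (2 * m + 5) + Nat.fib (2 * m + 7) := by
    exact_mod_cast three_mul_lucas_add_three (2 * m + 1)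
  ext <;> simp [Quaternion.re_sq, Quaternion.imI_sq, Quaternion.imJ_sq, Quaternion.imK_sq]
  · have := cast_fib_add m m
    have := cast_fib_add (m + 1) (m + 1)
    have := cast_fib_add (m + 2) (m + 2)
    have := cast_fib_add (m + 3) (m + 3)
    ring_nf at *
    linarith
  · have := cast_fib_add m (m + 1)
    ring_nf at *
    linarith
  · have := cast_fib_add m (m + 2)
    ring_nf at *
    linarith
  · have := cast_fib_add m (m + 3)
    ring_nf at *
    linarith

theorem fibQ_anticomm_sum (m : ℕ) :
    fibQ (m + 1) * fibQ (m + 2) + fibQ (m + 2) * fibQ (m + 1) +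
        (fibQ m * fibQ (m + 1) + fibQ (m + 1) * fibQ m) =
      2 • (2 * fibQ (2 * m + 2) - 3 * ((lucas (2 * m + 5) : ℝ) : ℍ[ℝ])) := by
  set b : ℕ → ℍ[ℝ] := fun j ↦ 2 * fibQ j - 3 * ((lucas (j + 3) : ℝ) : ℍ[ℝ])
  have hb : ∀ j, b (j + 2) = b (j + 1) + b j := by
    intro j
    simp only [b, fibQ_add_two, lucas, Nat.cast_add, coe_add]
    noncomm_ring
  have hS : ∀ k, fibQ (k + 1) ^ 2 + fibQ k ^ 2 = b (2 * k + 1) := fibQ_sq_add_fibQ_sq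
  rw [anticomm_add_anticomm_of_fib_rec fibQ_add_two, hS m, hS (m + 1), hS (m + 2)]
  exact sub_sub_eq_two_nsmul_of_fib_rec hb (2 * m + 1)

theorem dual_fib_sq_sum (n : ℕ) (hn : 1 ≤ n) :
    dQ n ^ 2 + dQ (n-1) ^ 2 =
      2 * dQ (2*n-1) - 3 * dL (2*n+2) +
        inl (2 * fibQ (2*n) - ((3 * (lucas (2*n+3) : ℝ)) : ℍ[ℝ])) * ε := by
  obtain ⟨m, rfl⟩ := Nat.exists_eq_add_of_le' hn
  rw [Nat.add_sub_cancel, show 2 * (m + 1) - 1 = 2 * m + 1 by omega,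
    show 2 * (m + 1) = 2 * m + 2 by ring]
  ext : 1
  · simpa [dQ, dL] using fibQ_sq_add_fibQ_sq m
  · calc (dQ (m + 1) ^ 2 + dQ m ^ 2).snd
        = fibQ (m + 1) * fibQ (m + 2) + fibQ (m + 2) * fibQ (m + 1) +
            (fibQ m * fibQ (m + 1) + fibQ (m + 1) * fibQ m) := by
          simp [dQ, sq]
      _ = 2 • (2 * fibQ (2 * m + 2) - 3 * ((lucas (2 * m + 5) : ℝ) : ℍ[ℝ])) := fibQ_anticomm_sum m
      _ = _ := by simp [dQ, dL, two_mul]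
end
end

section
/- Binet formula for dual Fibonacci quaternions: for all n ≥ 0, Q̃_n = (α* αⁿ − β* βⁿ)/(α − β), where α = (1+√5)/2, β = (1−√5)/2, α̲ = 1 + iα + jα² + kα³, β̲ = 1 + iβ + jβ² + kβ³, α* = α̲(1 + εα), β* = β̲(1 + εβ). -/
open Quaternion TrivSqZeroExt DualNumber

noncomputable section

/-! Binet's formula `F_m = (φ^m - ψ^m)/(φ - ψ)`, applied to the four components, gives
`Q_n = (α̲ φ^n - β̲ ψ^n)/(φ - ψ)`. Passing to `Q_{n+1}` multiplies the two geometric terms by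
`φ` and `ψ`, so `Q_n + ε Q_{n+1}` acquires the factors `1 + εφ` and `1 + εψ`. -/

theorem QuaternionAlgebra.mk_shift_eq_of_binet {R : Type*} [CommRing R] {c₁ c₂ c₃ : R}
    {f : ℕ → R} {s a b : R} (hf : ∀ m, f m = s * (a ^ m - b ^ m)) (n : ℕ) :
    (⟨f n, f (n + 1), f (n + 2), f (n + 3)⟩ : ℍ[R, c₁, c₂, c₃]) =
      s • (a ^ n • (⟨1, a, a ^ 2, a ^ 3⟩ : ℍ[R, c₁, c₂, c₃]) -
        b ^ n • (⟨1, b, b ^ 2, b ^ 3⟩ : ℍ[R, c₁, c₂, c₃])) := by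
  ext <;> simp [hf, pow_add]

open Real goldenRatio in
theorem fibQ_eq_binet (n : ℕ) :
    fibQ n =
      (φ - ψ)⁻¹ • (φ ^ n • (⟨1, φ, φ ^ 2, φ ^ 3⟩ : ℍ[ℝ]) - ψ ^ n • (⟨1, ψ, ψ ^ 2, ψ ^ 3⟩ : ℍ[ℝ])) :=
  QuaternionAlgebra.mk_shift_eq_of_binet (f := fun m => (Nat.fib m : ℝ))
    (fun m => by rw [coe_fib_eq, goldenRatio_sub_goldenConj, div_eq_inv_mul]) n

theorem DualNumber.inl_add_inl_succ_mul_eps_of_binet {R A : Type*} [CommRing R] [Ring A]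
    [Algebra R A] {Q : ℕ → A} {s a b : R} {u v : A}
    (hQ : ∀ n, Q n = s • (a ^ n • u - b ^ n • v)) (n : ℕ) :
    (inl (Q n) + inl (Q (n + 1)) * ε : DualNumber A) =
      s • (a ^ n • (inl u * (1 + a • ε)) - b ^ n • (inl v * (1 + b • ε))) := by
  ext
  · simp [hQ]
  · simp [hQ, pow_succ, mul_smul]

theorem dual_fib_binet (n : ℕ) :
    dQ n =
      ((1 + Real.sqrt 5)/2 - (1 - Real.sqrt 5)/2)⁻¹ •
        ((((1 + Real.sqrt 5)/2) ^ n) •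
            ((inl (⟨1, (1 + Real.sqrt 5)/2, ((1 + Real.sqrt 5)/2)^2, ((1 + Real.sqrt 5)/2)^3⟩ : ℍ[ℝ]) : DualNumber ℍ[ℝ]) *
              (1 + ((1 + Real.sqrt 5)/2) • (ε : DualNumber ℍ[ℝ]))) -
          (((1 - Real.sqrt 5)/2) ^ n) •
            ((inl (⟨1, (1 - Real.sqrt 5)/2, ((1 - Real.sqrt 5)/2)^2, ((1 - Real.sqrt 5)/2)^3⟩ : ℍ[ℝ]) : DualNumber ℍ[ℝ]) *
              (1 + ((1 - Real.sqrt 5)/2) • (ε : DualNumber ℍ[ℝ])))) :=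
  DualNumber.inl_add_inl_succ_mul_eps_of_binet fibQ_eq_binet n
end
end

section
/- Binet formula for dual Lucas quaternions: for all n ≥ 0, K̃_n = α* αⁿ + β* βⁿ, where α = (1+√5)/2, β = (1−√5)/2, α* = (1 + iα + jα² + kα³)(1 + εα), β* = (1 + iβ + jβ² + kβ³)(1 + εβ). -/
/-! Binet's formula L_m = φ^m + ψ^m, read off in each of the four components, gives
K_n = φ^n (1 + iφ + jφ² + kφ³) + ψ^n (1 + iψ + jψ² + kψ³). The dual part K_{n+1} carries one
more power of φ (resp. ψ), which is exactly what the factor 1 + φε (resp. 1 + ψε) supplies. -/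

open Quaternion TrivSqZeroExt DualNumber

noncomputable section

open Real goldenRatio

theorem lucas_eq_goldenRatio_pow_add_goldenConj_pow (n : ℕ) : (lucas n : ℝ) = φ ^ n + ψ ^ n := by
  induction n using Nat.twoStepInduction with
  | zero => norm_num [lucas]
  | one => simp [lucas]
  | more n ih₀ ih₁ =>
    rw [lucas, Nat.cast_add, ih₀, ih₁]
    linear_combination (-(φ ^ n)) * goldenRatio_sq - ψ ^ n * goldenConj_sq

theorem Quaternion.mk_shift_eq_of_eq_pow_add_pow {R : Type*} [CommRing R] {s : ℕ → R} {a b : R}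
    (hs : ∀ n, s n = a ^ n + b ^ n) (n : ℕ) :
    (⟨s n, s (n + 1), s (n + 2), s (n + 3)⟩ : ℍ[R]) =
      a ^ n • (⟨1, a, a ^ 2, a ^ 3⟩ : ℍ[R]) + b ^ n • (⟨1, b, b ^ 2, b ^ 3⟩ : ℍ[R]) := by
  ext <;> simp [hs] <;> ring

theorem DualNumber.inl_add_inl_succ_mul_eps_of_eq_pow_smul_add_pow_smul {R A : Type*} [CommRing R]
    [Ring A] [Algebra R A] {K : ℕ → A} {a b : R} {u v : A}
    (hK : ∀ n, K n = a ^ n • u + b ^ n • v) (n : ℕ) :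
    (inl (K n) + inl (K (n + 1)) * ε : DualNumber A) =
      a ^ n • (inl u * (1 + a • ε)) + b ^ n • (inl v * (1 + b • ε)) := by
  ext <;> simp [hK, pow_succ, mul_smul]

theorem lucasQ_eq_goldenRatio_pow_smul_add_goldenConj_pow_smul (n : ℕ) :
    lucasQ n = φ ^ n • (⟨1, φ, φ ^ 2, φ ^ 3⟩ : ℍ[ℝ]) + ψ ^ n • (⟨1, ψ, ψ ^ 2, ψ ^ 3⟩ : ℍ[ℝ]) :=
  Quaternion.mk_shift_eq_of_eq_pow_add_pow lucas_eq_goldenRatio_pow_add_goldenConj_pow n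

theorem dual_lucas_binet (n : ℕ) :
    dK n =
      (((1 + Real.sqrt 5)/2) ^ n) •
          ((inl (⟨1, (1 + Real.sqrt 5)/2, ((1 + Real.sqrt 5)/2)^2, ((1 + Real.sqrt 5)/2)^3⟩ : ℍ[ℝ]) : DualNumber ℍ[ℝ]) *
            (1 + ((1 + Real.sqrt 5)/2) • (ε : DualNumber ℍ[ℝ]))) +
        (((1 - Real.sqrt 5)/2) ^ n) •
          ((inl (⟨1, (1 - Real.sqrt 5)/2, ((1 - Real.sqrt 5)/2)^2, ((1 - Real.sqrt 5)/2)^3⟩ : ℍ[ℝ]) : DualNumber ℍ[ℝ]) *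
            (1 + ((1 - Real.sqrt 5)/2) • (ε : DualNumber ℍ[ℝ]))) :=
  DualNumber.inl_add_inl_succ_mul_eps_of_eq_pow_smul_add_pow_smul
    lucasQ_eq_goldenRatio_pow_smul_add_goldenConj_pow_smul n
end
end
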